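/- arXiv:1311.7678 — 3 statements merged into one kernel-verified Lean document; each statement's English description precedes it below -/
import Mathlib

section
/- Let 1 ≤ k ≤ n−1 and 1 ≤ p with p ≥ (k+1)/k. Define f₀(x',x'') = (2+|x'|)^{−(k+1)/p} e^{−|x''|²} / (log(2+|x'|))^{1/p+δ} for x' ∈ ℝ^{k+1}, x'' ∈ ℝ^{n−k−1}, where 0 < δ < 1/p' and 1/p + 1/p' = 1. Then f₀ ∈ L^p(ℝⁿ), but for every hyperplane {x' : θ·x' = s} in ℝ^{k+1} and every x'', the integral of f₀(·, x'') over that hyperplane is infinite. -/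
/-!
`|f₀|^p = (2+|x'|)^{-(k+1)} log(2+|x'|)^{-(1+δp)} e^{-p|x''|²}` is a product. In polar
coordinates on `ℝ^{k+1}` its `x'`-factor becomes
`r^k (2+r)^{-(k+1)} log(2+r)^{-(1+δp)} ≲ 1/(r log^{1+δp} r)`, integrable at infinity because
`1 + δp > 1`.

A hyperplane at distance `|s|` from the origin is an isometric copy of `ℝ^k` on which
`|x'| = √(s² + |w|²)`. In polar coordinates on `ℝ^k` the restriction of `f₀` is, at infinity,
at least a multiple of `r^{k-1} r^{-(k+1)/p} log^{-(1/p+δ)} r ≳ 1/(r log r)`, since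
`(k+1)/p ≤ k` and `1/p + δ < 1`; this is not integrable.

The substitution `x = eᵗ` turns `∫ x⁻¹ (log x)^s dx` into `∫ tˢ dt`, which decides both cases.
-/

open MeasureTheory Set Real Module
open scoped ENNReal RealInnerProductSpace

theorem integrableOn_Ioi_inv_mul_log_rpow_iff {a : ℝ} (ha : 1 < a) (s : ℝ) :
    IntegrableOn (fun x => x⁻¹ * log x ^ s) (Ioi a) ↔ s < -1 := by
  rw [← exp_log (zero_lt_one.trans ha), ← image_exp_Ioi,
    integrableOn_image_iff_integrableOn_abs_deriv_smul measurableSet_Ioi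
      (fun x _ => (hasDerivAt_exp x).hasDerivWithinAt) exp_injective.injOn,
    ← integrableOn_Ioi_rpow_iff (log_pos ha)]
  refine integrableOn_congr_fun (fun t _ => ?_) measurableSet_Ioi
  simp [abs_of_pos (exp_pos t)]

lemma one_le_log_of_four_le {x : ℝ} (hx : 4 ≤ x) : 1 ≤ log x := by
  rw [le_log_iff_exp_le (by linarith)]
  linarith [exp_one_lt_d9]

noncomputable def decayProfile (c a r : ℝ) : ℝ := (2 + r) ^ (-c) / log (2 + r) ^ a

section DecayProfile

variable {c a r : ℝ}

lemma log_two_add_pos (hr : 0 ≤ r) : 0 < log (2 + r) := log_pos (by linarith)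

lemma decayProfile_nonneg (hr : 0 ≤ r) : 0 ≤ decayProfile c a r := by
  have := log_two_add_pos hr
  unfold decayProfile
  positivity

lemma continuousOn_decayProfile : ContinuousOn (decayProfile c a) (Ici 0) := by
  intro r (hr : 0 ≤ r)
  have hlog := log_two_add_pos hr
  have h2 : 2 + r ≠ 0 := by positivity
  exact (((continuousAt_const.add continuousAt_id).rpow_const (Or.inl h2)).div
    ((continuousAt_const.add continuousAt_id).log h2 |>.rpow_const (Or.inl hlog.ne'))
    (by positivity)).continuousWithinAt

lemma decayProfile_rpow (p : ℝ) (hr : 0 ≤ r) :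
    decayProfile c a r ^ p = decayProfile (c * p) (a * p) r := by
  have := log_two_add_pos hr
  rw [decayProfile, decayProfile, div_rpow (by positivity) (by positivity),
    ← rpow_mul (by positivity), ← rpow_mul this.le, neg_mul]

lemma pow_mul_decayProfile_le {m : ℕ} (ha : 0 ≤ a) (hr : 1 < r) :
    r ^ m * decayProfile (m + 1) a r ≤ r⁻¹ * log r ^ (-a) := by
  have hr0 : 0 < r := by linarith
  have hlog : 0 < log r := log_pos hr
  have hpow : (2 + r) ^ (-((m : ℝ) + 1)) ≤ (r ^ (m + 1))⁻¹ := by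
    rw [← rpow_natCast, ← rpow_neg hr0.le]
    push_cast
    exact rpow_le_rpow_of_nonpos hr0 (by linarith) (by linarith)
  calc r ^ m * decayProfile (m + 1) a r
      ≤ r ^ m * ((r ^ (m + 1))⁻¹ / log r ^ a) := by
        unfold decayProfile
        gcongr
        linarith
    _ = r⁻¹ * log r ^ (-a) := by
        rw [rpow_neg hlog.le, pow_succ]
        field_simp

lemma inv_mul_log_le_pow_mul_decayProfile {m : ℕ} {R : ℝ} (hc : c ≤ m + 1) (ha0 : 0 ≤ a)
    (ha : a ≤ 1) (hr : 2 ≤ r) (hR : 0 ≤ R) (hRr : 2 + R ≤ 2 * r) :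
    r⁻¹ * log r ^ (-1 : ℝ) ≤ 2 ^ (m + 2) * (r ^ m * decayProfile c a R) := by
  have hr0 : 0 < r := by linarith
  have hlogr : 0 < log r := log_pos (by linarith)
  have hlogR := log_two_add_pos hR
  have hnum : ((2 * r) ^ (m + 1))⁻¹ ≤ (2 + R) ^ (-c) := by
    rw [← rpow_natCast, ← rpow_neg (by positivity)]
    push_cast
    calc (2 * r) ^ (-((m : ℝ) + 1)) ≤ (2 + R) ^ (-((m : ℝ) + 1)) :=
          rpow_le_rpow_of_nonpos (by positivity) hRr (by linarith)
      _ ≤ (2 + R) ^ (-c) := rpow_le_rpow_of_exponent_le (by linarith) (by linarith)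
  have hden : log (2 + R) ^ a ≤ 2 * log r :=
    calc log (2 + R) ^ a ≤ log (2 * r) ^ a :=
          rpow_le_rpow hlogR.le (log_le_log (by positivity) hRr) ha0
      _ ≤ log (2 * r) ^ (1 : ℝ) :=
          rpow_le_rpow_of_exponent_le (one_le_log_of_four_le (by linarith)) ha
      _ ≤ log (r ^ 2) := by
          rw [rpow_one]
          exact log_le_log (by positivity) (by nlinarith)
      _ = 2 * log r := by rw [log_pow]; norm_num
  calc r⁻¹ * log r ^ (-1 : ℝ)
      = 2 ^ (m + 2) * (r ^ m * (((2 * r) ^ (m + 1))⁻¹ / (2 * log r))) := by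
        rw [rpow_neg_one]
        field_simp
        ring
    _ ≤ 2 ^ (m + 2) * (r ^ m * decayProfile c a R) := by
        unfold decayProfile
        gcongr

end DecayProfile

lemma integrableOn_Ioi_pow_mul_decayProfile (m : ℕ) {a : ℝ} (ha : 1 < a) :
    IntegrableOn (fun r => r ^ m * decayProfile (m + 1) a r) (Ioi 0) := by
  have hcont : ContinuousOn (fun r => r ^ m * decayProfile (m + 1) a r) (Ici 0) :=
    (continuousOn_pow m).mul continuousOn_decayProfile
  rw [← Ioc_union_Ioi_eq_Ioi zero_le_two]
  refine ((hcont.mono Icc_subset_Ici_self).integrableOn_Icc.mono_set Ioc_subset_Icc_self).union ?_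
  refine ((integrableOn_Ioi_inv_mul_log_rpow_iff one_lt_two (-a)).2 (by linarith)).mono'
    ((hcont.mono (Ioi_subset_Ici zero_le_two)).aestronglyMeasurable measurableSet_Ioi) ?_
  refine (ae_restrict_iff' measurableSet_Ioi).2 (ae_of_all _ fun r (hr : 2 < r) => ?_)
  rw [norm_of_nonneg (mul_nonneg (by positivity) (decayProfile_nonneg (by linarith)))]
  exact pow_mul_decayProfile_le (by linarith) (by linarith)

lemma not_integrableOn_Ioi_pow_mul_decayProfile_sqrt (m : ℕ) {c a : ℝ} (hc : c ≤ m + 1)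
    (ha0 : 0 ≤ a) (ha : a ≤ 1) (s : ℝ) :
    ¬ IntegrableOn (fun r => r ^ m * decayProfile c a √(s ^ 2 + r ^ 2)) (Ioi 0) := by
  intro h
  have hs0 := abs_nonneg s
  refine (lt_irrefl (-1 : ℝ))
    ((integrableOn_Ioi_inv_mul_log_rpow_iff (by linarith : 1 < |s| + 2) (-1)).1 ?_)
  refine ((h.mono_set (Ioi_subset_Ioi (by positivity))).const_mul (2 ^ (m + 2))).mono'
    (by fun_prop) ((ae_restrict_iff' measurableSet_Ioi).2 (ae_of_all _ fun r hr => ?_))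
  have hr : |s| + 2 < r := hr
  have hlog : 0 < log r := log_pos (by linarith)
  have hsqrt : √(s ^ 2 + r ^ 2) ≤ |s| + r :=
    sqrt_le_iff.2 ⟨by linarith, by nlinarith [sq_abs s]⟩
  rw [norm_of_nonneg (mul_nonneg (inv_nonneg.2 (by linarith)) (rpow_nonneg hlog.le _))]
  exact inv_mul_log_le_pow_mul_decayProfile hc ha0 ha (by linarith) (sqrt_nonneg _)
    (by linarith)

section Radial

variable {E : Type*} [NormedAddCommGroup E] [NormedSpace ℝ E] [FiniteDimensional ℝ E]
  [Nontrivial E] [MeasurableSpace E] [BorelSpace E] (μ : Measure E) [μ.IsAddHaarMeasure]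

lemma integrable_decayProfile_norm {a : ℝ} (ha : 1 < a) :
    Integrable (fun x : E => decayProfile (finrank ℝ E) a ‖x‖) μ := by
  have hdim : finrank ℝ E - 1 + 1 = finrank ℝ E := Nat.sub_add_cancel finrank_pos
  rw [integrable_fun_norm_addHaar μ (f := decayProfile _ a)]
  have h := integrableOn_Ioi_pow_mul_decayProfile (finrank ℝ E - 1) ha
  rw [← Nat.cast_add_one, hdim] at h
  simpa only [smul_eq_mul] using h

lemma not_integrable_decayProfile_sqrt {c a : ℝ} (hc : c ≤ finrank ℝ E) (ha0 : 0 ≤ a)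
    (ha : a ≤ 1) (s : ℝ) :
    ¬ Integrable (fun x : E => decayProfile c a √(s ^ 2 + ‖x‖ ^ 2)) μ := by
  have hdim : finrank ℝ E - 1 + 1 = finrank ℝ E := Nat.sub_add_cancel finrank_pos
  rw [integrable_fun_norm_addHaar μ (f := fun r => decayProfile c a √(s ^ 2 + r ^ 2))]
  exact not_integrableOn_Ioi_pow_mul_decayProfile_sqrt _
    (by rw [← Nat.cast_add_one, hdim]; exact hc) ha0 ha s

end Radial

lemma integrable_exp_neg_mul_sq_norm {F : Type*} [NormedAddCommGroup F] [InnerProductSpace ℝ F]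
    [FiniteDimensional ℝ F] [MeasurableSpace F] [BorelSpace F] {b : ℝ} (hb : 0 < b) :
    Integrable fun x : F => exp (-b * ‖x‖ ^ 2) :=
  Integrable.of_integral_ne_zero <| by
    rw [GaussianFourier.integral_rexp_neg_mul_sq_norm hb]
    positivity

lemma memLp_decayProfile_mul_gaussian {E F : Type*} [NormedAddCommGroup E] [NormedSpace ℝ E]
    [FiniteDimensional ℝ E] [Nontrivial E] [MeasureSpace E] [BorelSpace E]
    [(volume : Measure E).IsAddHaarMeasure] [NormedAddCommGroup F] [InnerProductSpace ℝ F]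
    [FiniteDimensional ℝ F] [MeasurableSpace F] [BorelSpace F] {p c a : ℝ} (hp : 0 < p)
    (hc : c * p = finrank ℝ E) (ha : 1 < a * p) :
    MemLp (fun x : E × F => decayProfile c a ‖x.1‖ * exp (-‖x.2‖ ^ 2)) (ENNReal.ofReal p) := by
  have hmeas : AEStronglyMeasurable
      (fun x : E × F => decayProfile c a ‖x.1‖ * exp (-‖x.2‖ ^ 2)) :=
    ((continuousOn_decayProfile.comp_continuous (by fun_prop) fun _ => norm_nonneg _).mul
      (by fun_prop)).aestronglyMeasurable
  rw [← integrable_norm_rpow_iff hmeas (by simpa using hp) ENNReal.ofReal_ne_top,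
    ENNReal.toReal_ofReal hp.le]
  have hpow : ∀ x : E × F, ‖decayProfile c a ‖x.1‖ * exp (-‖x.2‖ ^ 2)‖ ^ p =
      decayProfile (c * p) (a * p) ‖x.1‖ * exp (-p * ‖x.2‖ ^ 2) := fun x => by
    rw [norm_of_nonneg (mul_nonneg (decayProfile_nonneg (norm_nonneg _)) (exp_pos _).le),
      mul_rpow (decayProfile_nonneg (norm_nonneg _)) (exp_pos _).le,
      decayProfile_rpow p (norm_nonneg _), ← exp_mul]
    ring_nf
  simp_rw [hpow, hc]
  exact (integrable_decayProfile_norm volume ha).mul_prod (integrable_exp_neg_mul_sq_norm hp)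

section Hyperplane

variable {V : Type*} [NormedAddCommGroup V] [InnerProductSpace ℝ V] {θ : V}

lemma setOf_inner_eq_eq_range (hθ : ‖θ‖ = 1) (s : ℝ) :
    {x : V | ⟪x, θ⟫ = s} = range fun w : (ℝ ∙ θ)ᗮ => s • θ + (w : V) := by
  have hθθ : ⟪θ, θ⟫ = 1 := by rw [real_inner_self_eq_norm_sq, hθ, one_pow]
  ext x
  constructor
  · intro (hx : ⟪x, θ⟫ = s)
    refine ⟨⟨x - s • θ, ?_⟩, add_sub_cancel _ _⟩
    rw [Submodule.mem_orthogonal_singleton_iff_inner_left, inner_sub_left, real_inner_smul_left,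
      hθθ, hx, mul_one, sub_self]
  · rintro ⟨w, rfl⟩
    have hw := Submodule.mem_orthogonal_singleton_iff_inner_left.1 w.2
    simp only [mem_ofPred_eq, inner_add_left, real_inner_smul_left, hθθ, hw, mul_one, add_zero]

lemma norm_smul_add_of_mem_orthogonal (hθ : ‖θ‖ = 1) (s : ℝ) (w : (ℝ ∙ θ)ᗮ) :
    ‖s • θ + (w : V)‖ = √(s ^ 2 + ‖w‖ ^ 2) := by
  have hw := Submodule.mem_orthogonal_singleton_iff_inner_right.1 w.2
  have h := norm_add_sq_eq_norm_sq_add_norm_sq_real (x := s • θ) (y := (w : V))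
    (by rw [real_inner_smul_left, hw, mul_zero])
  rw [← sqrt_sq (norm_nonneg _), sq, h, norm_smul, hθ, Submodule.coe_norm, norm_eq_abs]
  congr 1
  rw [mul_one, abs_mul_abs_self]
  ring

variable [MeasurableSpace V] [BorelSpace V]

lemma setLIntegral_setOf_inner_eq (hθ : ‖θ‖ = 1) (s : ℝ) {d : ℝ} (hd : 0 ≤ d)
    (F : V → ℝ≥0∞) :
    ∫⁻ x in {x : V | ⟪x, θ⟫ = s}, F x ∂μH[d] = ∫⁻ w : (ℝ ∙ θ)ᗮ, F (s • θ + w) ∂μH[d] := by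
  have hiso : Isometry fun w : (ℝ ∙ θ)ᗮ => s • θ + (w : V) :=
    (IsometryEquiv.addLeft (s • θ)).isometry.comp isometry_subtype_coe
  have hclosed : IsClosed {x : V | ⟪x, θ⟫ = s} := isClosed_eq (by fun_prop) continuous_const
  rw [setOf_inner_eq_eq_range hθ] at hclosed ⊢
  rw [← hiso.map_hausdorffMeasure (Or.inl hd),
    (Topology.IsClosedEmbedding.mk hiso.isEmbedding hclosed).measurableEmbedding.lintegral_map]

lemma setLIntegral_decayProfile_setOf_inner_eq_top [FiniteDimensional ℝ V] {k : ℕ}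
    (hV : finrank ℝ V = k + 1) (hk : 1 ≤ k) (hθ : ‖θ‖ = 1) (s : ℝ) {c a : ℝ} (hc : c ≤ k)
    (ha0 : 0 ≤ a) (ha : a ≤ 1) :
    ∫⁻ x in {x : V | ⟪x, θ⟫ = s}, ENNReal.ofReal (decayProfile c a ‖x‖) ∂μH[(k : ℝ)] = ⊤ := by
  have hW : finrank ℝ (ℝ ∙ θ)ᗮ = k := by
    have : Fact (finrank ℝ V = k + 1) := ⟨hV⟩
    exact Submodule.finrank_orthogonal_span_singleton (norm_ne_zero_iff.1 (by simp [hθ]))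
  have : Nontrivial (ℝ ∙ θ)ᗮ := Module.nontrivial_of_finrank_pos (R := ℝ) (by omega)
  have hmeas : AEStronglyMeasurable
      (fun w : (ℝ ∙ θ)ᗮ => decayProfile c a √(s ^ 2 + ‖w‖ ^ 2)) μH[(k : ℝ)] :=
    (continuousOn_decayProfile.comp_continuous (by fun_prop)
      fun _ => sqrt_nonneg _).aestronglyMeasurable
  rw [setLIntegral_setOf_inner_eq hθ s (Nat.cast_nonneg k)]
  simp_rw [norm_smul_add_of_mem_orthogonal hθ]
  rw [← not_ne_iff, lintegral_ofReal_ne_top_iff_integrable hmeas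
    (ae_of_all _ fun _ => decayProfile_nonneg (sqrt_nonneg _)), ← hW]
  exact not_integrable_decayProfile_sqrt _ (by rw [hW]; exact hc) ha0 ha s

end Hyperplane

theorem stmt2_general (n k : ℕ) (hk : 1 ≤ k) (p p' δ : ℝ)
    (hp2 : ((k : ℝ) + 1) / k ≤ p) (hpp' : 1 / p + 1 / p' = 1)
    (hδ1 : 0 < δ) (hδ2 : δ < 1 / p')
    (f₀ : EuclideanSpace ℝ (Fin (k + 1)) × EuclideanSpace ℝ (Fin (n - k - 1)) → ℝ)
    (hf₀ : ∀ x, f₀ x = (2 + ‖x.1‖) ^ (-((k : ℝ) + 1) / p) * Real.exp (-‖x.2‖ ^ 2) /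
        (Real.log (2 + ‖x.1‖)) ^ (1 / p + δ)) :
    MemLp f₀ (ENNReal.ofReal p) volume ∧
    ∀ θ : EuclideanSpace ℝ (Fin (k + 1)), ‖θ‖ = 1 → ∀ s : ℝ,
      ∀ x'' : EuclideanSpace ℝ (Fin (n - k - 1)),
        ∫⁻ x' in {x' : EuclideanSpace ℝ (Fin (k + 1)) | (inner ℝ x' θ : ℝ) = s},
          ENNReal.ofReal (f₀ (x', x'')) ∂(μH[(k : ℝ)]) = ⊤ := by
  have hk0 : (0 : ℝ) < k := by exact_mod_cast hk
  have hp : 0 < p := lt_of_lt_of_le (by positivity) hp2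
  have hf : f₀ = fun x => decayProfile ((k + 1) / p) (1 / p + δ) ‖x.1‖ * exp (-‖x.2‖ ^ 2) := by
    funext x
    rw [hf₀, decayProfile, neg_div]
    ring
  subst hf
  refine ⟨memLp_decayProfile_mul_gaussian hp ?_ ?_, fun θ hθ s x'' => ?_⟩
  · rw [finrank_euclideanSpace_fin]
    field_simp
    push_cast
    ring
  · rw [add_mul, one_div_mul_cancel hp.ne']
    nlinarith
  · have hc : ((k : ℝ) + 1) / p ≤ k := by
      rw [div_le_iff₀ hp]
      linarith [(div_le_iff₀ hk0).1 hp2]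
    simp_rw [ENNReal.ofReal_mul' (exp_pos _).le]
    rw [lintegral_mul_const' _ _ ENNReal.ofReal_ne_top,
      setLIntegral_decayProfile_setOf_inner_eq_top finrank_euclideanSpace_fin hk hθ s hc
        (by positivity) (by linarith), ENNReal.top_mul (ENNReal.ofReal_pos.2 (exp_pos _)).ne']

/-- Sharpness of the bound `p < (k+1)/k`: for `p ≥ (k+1)/k` the explicit function
`f₀(x',x'') = (2+|x'|)^{-(k+1)/p} e^{-|x''|²} / (log(2+|x'|))^{1/p+δ}`, `0 < δ < 1/p'`,
belongs to `L^p(ℝⁿ)` but its integral over every hyperplane `{x' : θ·x' = s}` of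
`ℝ^{k+1}` (for every fixed `x''`) is infinite. -/
theorem stmt2 (n k : ℕ) (hk : 1 ≤ k) (hkn : k ≤ n - 1) (p p' δ : ℝ)
    (hp1 : 1 ≤ p) (hp2 : ((k : ℝ) + 1) / k ≤ p) (hpp' : 1 / p + 1 / p' = 1)
    (hδ1 : 0 < δ) (hδ2 : δ < 1 / p')
    (f₀ : EuclideanSpace ℝ (Fin (k + 1)) × EuclideanSpace ℝ (Fin (n - k - 1)) → ℝ)
    (hf₀ : ∀ x, f₀ x = (2 + ‖x.1‖) ^ (-((k : ℝ) + 1) / p) * Real.exp (-‖x.2‖ ^ 2) /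
        (Real.log (2 + ‖x.1‖)) ^ (1 / p + δ)) :
    MemLp f₀ (ENNReal.ofReal p) volume ∧
    ∀ θ : EuclideanSpace ℝ (Fin (k + 1)), ‖θ‖ = 1 → ∀ s : ℝ,
      ∀ x'' : EuclideanSpace ℝ (Fin (n - k - 1)),
        ∫⁻ x' in {x' : EuclideanSpace ℝ (Fin (k + 1)) | (inner ℝ x' θ : ℝ) = s},
          ENNReal.ofReal (f₀ (x', x'')) ∂(μH[(k : ℝ)]) = ⊤ :=
  stmt2_general n k hk p p' δ hp2 hpp' hδ1 hδ2 f₀ hf₀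
end

section
/- Let 0 ≤ k < n−1 and 1 ≤ p ≤ n−k. The function f̃(θ) = |θ'|^{−1}(1 − log|θ'|)^{−1} on Sⁿ, where θ' = (θ₁,…,θ_{n−k}), belongs to L^p(Sⁿ). -/
/-!
Write `g(θ) = |θ'|` and `N = n - k`. The sphere is covered by the finitely many charts
`y ↦ normalize (insertNth j (±1) y)`, which are Lipschitz because `normalize` is Lipschitz on
`{‖x‖ ≥ 1}`. On the tube `{g ≤ t}` with `t ≤ 1/2` some coordinate `θ_j`, `j ≥ N`, is bounded
below, so the tube is the image under such charts of a box with `N` sides of length `O(t)`: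
its `n`-dimensional Hausdorff measure is `O(t^N)`. On the shell `e^{-(m+1)} < g ≤ e^{-m}` the
function is at most `e^{m+1}/(m+1)`, hence `∫ f^p ≤ C ∑ₘ (m+1)^{-p} e^{-(N-p)m}`, which converges
for `p < N` thanks to the exponential and for `p = N` because `N ≥ 2`.
-/

open MeasureTheory
open scoped ENNReal

noncomputable def logWeight (s : ℝ) : ℝ := s⁻¹ * (1 - Real.log s)⁻¹

lemma summable_add_one_rpow_neg_mul_exp {p q : ℝ} (hp : 0 ≤ p) (hpq : p ≤ q) (hq : 1 < q) :
    Summable fun m : ℕ => ((m : ℝ) + 1) ^ (-p) * Real.exp (-(q - p) * m) := by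
  rcases hpq.lt_or_eq with hlt | rfl
  · refine Summable.of_nonneg_of_le (fun m => by positivity) (fun m => ?_)
      (summable_geometric_of_lt_one (Real.exp_pos (-(q - p))).le
        (Real.exp_lt_one_iff.mpr (by linarith)))
    rw [mul_comm _ (m : ℝ), Real.exp_nat_mul]
    refine mul_le_of_le_one_left (by positivity) ?_
    exact Real.rpow_le_one_of_one_le_of_nonpos (by linarith [m.cast_nonneg (α := ℝ)]) (by linarith)
  · simp only [sub_self, neg_zero, zero_mul, Real.exp_zero, mul_one]
    simpa using (summable_nat_add_iff 1).mpr (Real.summable_nat_rpow.mpr (by linarith : -p < -1))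

lemma logWeight_le {m : ℕ} {s : ℝ} (hlo : Real.exp (-((m : ℝ) + 1)) < s)
    (hhi : s ≤ Real.exp (-(m : ℝ))) : logWeight s ≤ Real.exp ((m : ℝ) + 1) * ((m : ℝ) + 1)⁻¹ := by
  have hs : 0 < s := (Real.exp_pos _).trans hlo
  have hinv : s⁻¹ ≤ Real.exp ((m : ℝ) + 1) := by
    simpa only [Real.exp_neg, inv_inv] using inv_anti₀ (Real.exp_pos _) hlo.le
  have hlog : (m : ℝ) + 1 ≤ 1 - Real.log s := by
    linarith [Real.log_le_log hs hhi, Real.log_exp (-(m : ℝ))]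
  exact mul_le_mul hinv (inv_anti₀ (by positivity) hlog) (inv_nonneg.mpr (by linarith))
    (Real.exp_pos _).le

lemma logWeight_nonneg {s : ℝ} (h0 : 0 ≤ s) (h1 : s ≤ 1) : 0 ≤ logWeight s :=
  mul_nonneg (inv_nonneg.mpr h0) (inv_nonneg.mpr (by linarith [Real.log_nonpos h0 h1]))

lemma measurable_logWeight : Measurable logWeight := by
  unfold logWeight; fun_prop

lemma exists_nat_exp_neg_lt_le {s : ℝ} (h0 : 0 < s) (h1 : s ≤ 1) :
    ∃ m : ℕ, Real.exp (-((m : ℝ) + 1)) < s ∧ s ≤ Real.exp (-(m : ℝ)) := by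
  have hlog : 0 ≤ -Real.log s := neg_nonneg.mpr (Real.log_nonpos h0.le h1)
  refine ⟨⌊-Real.log s⌋₊, (Real.lt_log_iff_exp_lt h0).mp ?_, (Real.log_le_iff_le_exp h0).mp ?_⟩
  · linarith [Nat.lt_floor_add_one (-Real.log s)]
  · linarith [Nat.floor_le hlog]

lemma exp_mul_inv_rpow_mul_exp_neg_pow (m N : ℕ) (p : ℝ) :
    (Real.exp ((m : ℝ) + 1) * ((m : ℝ) + 1)⁻¹) ^ p * Real.exp (-(m : ℝ)) ^ N
      = Real.exp p * (((m : ℝ) + 1) ^ (-p) * Real.exp (-(N - p) * m)) := by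
  rw [Real.mul_rpow (Real.exp_pos _).le (by positivity), ← Real.exp_mul,
    Real.inv_rpow (by positivity), ← Real.rpow_neg (by positivity), ← Real.exp_nat_mul]
  have hexp : Real.exp (((m : ℝ) + 1) * p) * Real.exp (N * -(m : ℝ))
      = Real.exp p * Real.exp (-(N - p) * m) := by
    rw [← Real.exp_add, ← Real.exp_add]; ring_nf
  linear_combination ((m : ℝ) + 1) ^ (-p) * hexp

theorem memLp_logWeight_comp {X : Type*} [MeasurableSpace X] {μ : Measure X} {g : X → ℝ}
    (hg : Measurable g) (hg0 : ∀ x, 0 ≤ g x) (hg1 : ∀ᵐ x ∂μ, g x ≤ 1) {N : ℕ} (hN : 1 < N)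
    {C : ℝ≥0∞} (hC : C ≠ ∞) (hμ : ∀ t, 0 < t → μ {x | g x ≤ t} ≤ C * ENNReal.ofReal t ^ N)
    {p : ℝ} (hpN : p ≤ N) :
    MemLp (fun x => logWeight (g x)) (ENNReal.ofReal p) μ := by
  have hf : AEStronglyMeasurable (fun x => logWeight (g x)) μ :=
    (measurable_logWeight.comp hg).aestronglyMeasurable
  rcases le_or_gt p 0 with hp | hp
  · rw [ENNReal.ofReal_eq_zero.mpr hp]
    exact memLp_zero_iff_aestronglyMeasurable.mpr hf
  refine ⟨hf, (eLpNorm_lt_top_iff_lintegral_rpow_enorm_lt_top (by simpa using hp)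
    ENNReal.ofReal_ne_top).mpr ?_⟩
  rw [ENNReal.toReal_ofReal hp.le]
  set a : ℕ → ℝ := fun m => Real.exp ((m : ℝ) + 1) * ((m : ℝ) + 1)⁻¹
  set B : ℕ → Set X := fun m => {x | Real.exp (-((m : ℝ) + 1)) < g x ∧ g x ≤ Real.exp (-(m : ℝ))}
  have hBmeas : ∀ m, MeasurableSet (B m) := fun m =>
    (measurableSet_lt measurable_const hg).inter (measurableSet_le hg measurable_const)
  have hpt : ∀ᵐ x ∂μ, ‖logWeight (g x)‖ₑ ^ p
      ≤ ∑' m, (B m).indicator (fun _ => ENNReal.ofReal (a m) ^ p) x := by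
    filter_upwards [hg1] with x hx1
    rcases (hg0 x).eq_or_lt with hx0 | hx0
    -- `logWeight 0 = 0`, as `0⁻¹ = 0`
    · simp [← hx0, logWeight, ENNReal.zero_rpow_of_pos hp]
    obtain ⟨m, hm⟩ := exists_nat_exp_neg_lt_le hx0 hx1
    calc ‖logWeight (g x)‖ₑ ^ p ≤ ENNReal.ofReal (a m) ^ p := by
          rw [Real.enorm_eq_ofReal (logWeight_nonneg (hg0 x) hx1)]
          gcongr
          exact logWeight_le hm.1 hm.2
      _ = (B m).indicator (fun _ => ENNReal.ofReal (a m) ^ p) x := by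
          rw [Set.indicator_of_mem (show x ∈ B m from hm)]
      _ ≤ _ := ENNReal.le_tsum m
  have hB : ∀ m, ENNReal.ofReal (a m) ^ p * μ (B m)
      ≤ C * ENNReal.ofReal (Real.exp p * (((m : ℝ) + 1) ^ (-p) * Real.exp (-(N - p) * m))) := by
    intro m
    calc ENNReal.ofReal (a m) ^ p * μ (B m)
        ≤ ENNReal.ofReal (a m) ^ p * (C * ENNReal.ofReal (Real.exp (-(m : ℝ))) ^ N) := by
          gcongr
          exact (measure_mono fun x hx => hx.2).trans (hμ _ (Real.exp_pos _))
      _ = C * ENNReal.ofReal (a m ^ p * Real.exp (-(m : ℝ)) ^ N) := by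
          rw [ENNReal.ofReal_rpow_of_nonneg (by positivity) hp.le, ← ENNReal.ofReal_pow
            (Real.exp_pos _).le, ENNReal.ofReal_mul (by positivity)]
          ring
      _ = _ := by rw [exp_mul_inv_rpow_mul_exp_neg_pow]
  have hsum := (summable_add_one_rpow_neg_mul_exp hp.le hpN (by exact_mod_cast hN)).mul_left
    (Real.exp p)
  calc ∫⁻ x, ‖logWeight (g x)‖ₑ ^ p ∂μ
      ≤ ∫⁻ x, ∑' m, (B m).indicator (fun _ => ENNReal.ofReal (a m) ^ p) x ∂μ :=
        lintegral_mono_ae hpt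
    _ = ∑' m, ENNReal.ofReal (a m) ^ p * μ (B m) := by
        rw [lintegral_tsum fun m => (measurable_const.indicator (hBmeas m)).aemeasurable]
        exact tsum_congr fun m => lintegral_indicator_const (hBmeas m) _
    _ ≤ ∑' m : ℕ, C * ENNReal.ofReal
          (Real.exp p * (((m : ℝ) + 1) ^ (-p) * Real.exp (-(N - p) * m))) :=
        ENNReal.tsum_le_tsum hB
    _ < ∞ := by
        rw [ENNReal.tsum_mul_left, ← ENNReal.ofReal_tsum_of_nonneg (fun m => by positivity) hsum]
        exact ENNReal.mul_lt_top hC.lt_top ENNReal.ofReal_lt_top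

lemma NormedSpace.dist_normalize_le {V : Type*} [NormedAddCommGroup V] [NormedSpace ℝ V] {x : V}
    (hx : x ≠ 0) (y : V) :
    dist (NormedSpace.normalize x) (NormedSpace.normalize y) ≤ 2 * dist x y / ‖x‖ := by
  have hx' : 0 < ‖x‖ := norm_pos_iff.mpr hx
  have hsplit : NormedSpace.normalize x - NormedSpace.normalize y
      = ‖x‖⁻¹ • (x - y) + (‖x‖⁻¹ - ‖y‖⁻¹) • y := by
    simp only [NormedSpace.normalize, smul_sub, sub_smul]; abel
  have hy : ‖(‖x‖⁻¹ - ‖y‖⁻¹) • y‖ ≤ ‖x - y‖ / ‖x‖ := by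
    rcases eq_or_ne y 0 with rfl | hy
    · simp only [smul_zero, norm_zero]; positivity
    have hy' : 0 < ‖y‖ := norm_pos_iff.mpr hy
    calc ‖(‖x‖⁻¹ - ‖y‖⁻¹) • y‖ = |‖y‖ - ‖x‖| / ‖x‖ := by
          rw [norm_smul, Real.norm_eq_abs, inv_sub_inv hx'.ne' hy'.ne', abs_div,
            abs_of_pos (mul_pos hx' hy')]
          field_simp
      _ ≤ ‖x - y‖ / ‖x‖ := by
          gcongr
          rw [norm_sub_rev]
          exact abs_norm_sub_norm_le y x
  rw [dist_eq_norm, dist_eq_norm, hsplit]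
  calc _ ≤ ‖‖x‖⁻¹ • (x - y)‖ + ‖(‖x‖⁻¹ - ‖y‖⁻¹) • y‖ := norm_add_le _ _
    _ ≤ ‖x - y‖ / ‖x‖ + ‖x - y‖ / ‖x‖ := by
        gcongr
        rw [norm_smul, norm_inv, norm_norm, inv_mul_eq_div]
    _ = _ := by ring

noncomputable def sphereChart {n : ℕ} (j : Fin (n + 1)) (ε : ℝ) (y : Fin n → ℝ) :
    EuclideanSpace ℝ (Fin (n + 1)) :=
  NormedSpace.normalize (WithLp.toLp 2 (j.insertNth ε y))

lemma lipschitzWith_sphereChart {n : ℕ} (j : Fin (n + 1)) {ε : ℝ} (hε : 1 ≤ |ε|) :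
    LipschitzWith (2 * NNReal.sqrt (n + 1)) (sphereChart j ε) := by
  refine LipschitzWith.of_dist_le_mul fun y z => ?_
  set v : EuclideanSpace ℝ (Fin (n + 1)) := WithLp.toLp 2 (j.insertNth ε y)
  have hv : 1 ≤ ‖v‖ := hε.trans (by simpa [v] using PiLp.norm_apply_le v j)
  have hlip := (PiLp.lipschitzWith_toLp 2 (fun _ : Fin (n + 1) => ℝ)).dist_le_mul
    (j.insertNth ε y) (j.insertNth ε z)
  rw [Fin.dist_insertNth_insertNth, dist_self, max_eq_right dist_nonneg] at hlip
  calc dist (sphereChart j ε y) (sphereChart j ε z)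
      ≤ 2 * dist v (WithLp.toLp 2 (j.insertNth ε z)) / ‖v‖ :=
        NormedSpace.dist_normalize_le (norm_pos_iff.mp (one_pos.trans_le hv)) _
    _ ≤ 2 * dist v (WithLp.toLp 2 (j.insertNth ε z)) := div_le_self (by positivity) hv
    _ ≤ 2 * (_ * dist y z) := by gcongr
    _ = _ := by
        push_cast [Fintype.card_fin, NNReal.sqrt_eq_rpow, one_div, ENNReal.toReal_inv,
          ENNReal.toReal_ofNat]
        ring

lemma hausdorffMeasure_sphereChart_image_le {n : ℕ} (j : Fin (n + 1)) {ε : ℝ} (hε : 1 ≤ |ε|)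
    (s : Set (Fin n → ℝ)) :
    μH[n] (sphereChart j ε '' s) ≤ (2 * NNReal.sqrt (n + 1) : ℝ≥0∞) ^ (n : ℝ) * volume s := by
  have h := (lipschitzWith_sphereChart j hε).hausdorffMeasure_image_le (Nat.cast_nonneg n) s
  have hvol : (μH[n] : Measure (Fin n → ℝ)) = volume := by
    simpa using hausdorffMeasure_pi_real (ι := Fin n)
  rw [hvol] at h
  exact_mod_cast h

lemma sphereChart_removeNth {n : ℕ} {θ : EuclideanSpace ℝ (Fin (n + 1))} (hθ : ‖θ‖ = 1)
    {j : Fin (n + 1)} (hj : θ j ≠ 0) {ε : ℝ} (hε : ε * |θ j| = θ j) :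
    sphereChart j ε (|θ j|⁻¹ • j.removeNth θ) = θ := by
  have hpos : 0 < |θ j| := abs_pos.mpr hj
  have h : WithLp.toLp 2 (j.insertNth ε (|θ j|⁻¹ • j.removeNth θ)) = |θ j|⁻¹ • θ := by
    ext i
    refine j.succAboveCases ?_ (fun i => ?_) i
    · simp only [Fin.insertNth_apply_same, PiLp.smul_apply, smul_eq_mul]
      nth_rw 2 [← hε]
      rw [mul_comm, mul_inv_cancel_right₀ hpos.ne']
    · simp only [Fin.insertNth_apply_succAbove, PiLp.smul_apply, smul_eq_mul]
      rfl
  rw [sphereChart, h, NormedSpace.normalize_smul_of_pos (inv_pos.mpr hpos),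
    NormedSpace.normalize_eq_self_of_norm_eq_one hθ]

/-- `|θ'|²` for the projection `θ'` of `θ` onto the first `m` coordinates. -/
def headSqNorm {N : ℕ} (m : ℕ) (θ : EuclideanSpace ℝ (Fin N)) : ℝ :=
  ∑ i : Fin N, if (i : ℕ) < m then θ i ^ 2 else 0

lemma sq_le_headSqNorm {N m : ℕ} (θ : EuclideanSpace ℝ (Fin N)) {i : Fin N} (hi : (i : ℕ) < m) :
    θ i ^ 2 ≤ headSqNorm m θ := by
  have h := Finset.single_le_sum (f := fun i : Fin N => if (i : ℕ) < m then θ i ^ 2 else 0)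
    (fun i _ => by positivity) (Finset.mem_univ i)
  simpa only [headSqNorm, hi, if_true] using h

lemma headSqNorm_add_sum_tail_eq_norm_sq {N : ℕ} (m : ℕ) (θ : EuclideanSpace ℝ (Fin N)) :
    headSqNorm m θ + ∑ i : Fin N with m ≤ i.val, θ i ^ 2 = ‖θ‖ ^ 2 := by
  rw [EuclideanSpace.real_norm_sq_eq, headSqNorm, ← Finset.sum_filter,
    ← Finset.sum_filter_add_sum_filter_not Finset.univ (fun i : Fin N => (i : ℕ) < m)]
  simp only [not_lt]

lemma continuous_headSqNorm {N : ℕ} (m : ℕ) :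
    Continuous (headSqNorm m : EuclideanSpace ℝ (Fin N) → ℝ) := by
  unfold headSqNorm
  exact continuous_finsetSum _ fun i _ => by split_ifs <;> fun_prop

lemma headSqNorm_le_norm_sq {N : ℕ} (m : ℕ) (θ : EuclideanSpace ℝ (Fin N)) :
    headSqNorm m θ ≤ ‖θ‖ ^ 2 := by
  rw [← headSqNorm_add_sum_tail_eq_norm_sq m θ]
  exact le_add_of_nonneg_right (Finset.sum_nonneg fun i _ => sq_nonneg _)

lemma exists_abs_coord_ge_of_headSqNorm_le {n m : ℕ} (hm : m ≤ n)
    {θ : EuclideanSpace ℝ (Fin (n + 1))} (hθ : ‖θ‖ = 1) (hhead : headSqNorm m θ ≤ 1 / 4) :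
    ∃ j : Fin (n + 1), m ≤ (j : ℕ) ∧ 1 ≤ 2 * (n + 1) * |θ j| := by
  have hne : (Finset.univ.filter fun i : Fin (n + 1) => m ≤ (i : ℕ)).Nonempty :=
    ⟨Fin.last n, by simpa using hm⟩
  -- the largest `θ j ^ 2` with `m ≤ j` is at least `(3/4) / (n+1)`, and `θ j ^ 2 ≤ |θ j|`
  obtain ⟨j, hj, hmax⟩ := Finset.exists_max_image _ (fun i => θ i ^ 2) hne
  refine ⟨j, (Finset.mem_filter.mp hj).2, ?_⟩
  have hsum := Finset.sum_le_card_nsmul _ _ _ hmax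
  have hcard := Finset.card_filter_le Finset.univ fun i : Fin (n + 1) => m ≤ (i : ℕ)
  rw [Finset.card_univ, Fintype.card_fin] at hcard
  have hcard' : ((Finset.univ.filter fun i : Fin (n + 1) => m ≤ (i : ℕ)).card : ℝ) ≤ n + 1 := by
    exact_mod_cast hcard
  have hsplit := headSqNorm_add_sum_tail_eq_norm_sq m θ
  rw [hθ] at hsplit
  rw [nsmul_eq_mul] at hsum
  have hj1 : |θ j| ≤ 1 := hθ ▸ PiLp.norm_apply_le θ j
  have hsq : θ j ^ 2 ≤ |θ j| := by
    rw [← sq_abs]; nlinarith [abs_nonneg (θ j)]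
  nlinarith [sq_nonneg (θ j)]

def headBox (n m : ℕ) (R t : ℝ) : Set (Fin n → ℝ) :=
  Set.univ.pi fun i =>
    Set.Icc (-(R * if (i : ℕ) < m then t else 1)) (R * if (i : ℕ) < m then t else 1)

lemma volume_headBox {n m : ℕ} (hm : m ≤ n) {R t : ℝ} (hR : 0 ≤ R) :
    volume (headBox n m R t) = ENNReal.ofReal (2 * R) ^ n * ENNReal.ofReal t ^ m := by
  have hside : ∀ i : Fin n, ENNReal.ofReal ((R * if (i : ℕ) < m then t else 1)
      - -(R * if (i : ℕ) < m then t else 1))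
      = ENNReal.ofReal (2 * R) * if (i : ℕ) < m then ENNReal.ofReal t else 1 := by
    intro i
    split_ifs
    · rw [← ENNReal.ofReal_mul (by positivity)]; ring_nf
    · rw [mul_one]; ring_nf
  simp only [headBox, volume_pi_pi, Real.volume_Icc, hside, Finset.prod_mul_distrib,
    Finset.prod_const, Finset.card_univ, Fintype.card_fin, Finset.prod_ite, one_pow, mul_one,
    Fin.card_filter_val_lt, min_eq_right hm]

lemma exists_mem_sphereChart_image_headBox {n m : ℕ} (hm : m ≤ n) {t : ℝ} (ht0 : 0 ≤ t)
    (ht : t ≤ 1 / 2) {θ : EuclideanSpace ℝ (Fin (n + 1))} (hθ : ‖θ‖ = 1)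
    (hhead : headSqNorm m θ ≤ t ^ 2) :
    ∃ j, θ ∈ sphereChart j 1 '' headBox n m (2 * (n + 1)) t ∪
      sphereChart j (-1) '' headBox n m (2 * (n + 1)) t := by
  obtain ⟨j, hmj, hθj⟩ := exists_abs_coord_ge_of_headSqNorm_le hm hθ (by nlinarith)
  have hj0 : θ j ≠ 0 := fun h => by norm_num [h] at hθj
  have hpos : 0 < |θ j| := abs_pos.mpr hj0
  have hinv : |θ j|⁻¹ ≤ 2 * (n + 1) := by
    rw [inv_le_iff_one_le_mul₀ hpos]; linarith
  have hy : |θ j|⁻¹ • j.removeNth θ ∈ headBox n m (2 * (n + 1)) t := by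
    intro i _
    rw [Set.mem_Icc, ← abs_le, Pi.smul_apply, smul_eq_mul, abs_mul, abs_inv, abs_abs]
    refine mul_le_mul hinv ?_ (abs_nonneg _) (by positivity)
    split_ifs with hi
    · have hlt : i.castSucc < j := by rw [Fin.lt_def, Fin.val_castSucc]; omega
      rw [Fin.removeNth, Fin.succAbove_of_castSucc_lt j i hlt]
      exact abs_le_of_sq_le_sq ((sq_le_headSqNorm θ (by simpa using hi)).trans hhead) ht0
    · exact hθ ▸ PiLp.norm_apply_le θ _
  refine ⟨j, ?_⟩
  rcases hj0.lt_or_gt with hneg | hpos'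
  · exact Or.inr ⟨_, hy, sphereChart_removeNth hθ hj0 (by rw [abs_of_neg hneg]; ring)⟩
  · exact Or.inl ⟨_, hy, sphereChart_removeNth hθ hj0 (by rw [abs_of_pos hpos']; ring)⟩

theorem exists_hausdorffMeasure_headSqNorm_le_of_le_half {n m : ℕ} (hm : m ≤ n) :
    ∃ C : ℝ≥0∞, C ≠ ∞ ∧ ∀ t : ℝ, 0 ≤ t → t ≤ 1 / 2 →
      μH[n] ({θ | headSqNorm m θ ≤ t ^ 2} ∩ Metric.sphere (0 : EuclideanSpace ℝ (Fin (n + 1))) 1)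
        ≤ C * ENNReal.ofReal t ^ m := by
  set K : ℝ≥0∞ := (2 * NNReal.sqrt (n + 1) : ℝ≥0∞) ^ (n : ℝ)
  set R : ℝ := 2 * (n + 1)
  refine ⟨(n + 1) * (2 * (K * ENNReal.ofReal (2 * R) ^ n)), by finiteness, fun t ht0 ht => ?_⟩
  have hcover : {θ | headSqNorm m θ ≤ t ^ 2} ∩ Metric.sphere 0 1 ⊆
      ⋃ j, (sphereChart j 1 '' headBox n m R t ∪ sphereChart j (-1) '' headBox n m R t) :=
    fun θ ⟨hhead, hθ⟩ => Set.mem_iUnion.mpr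
      (exists_mem_sphereChart_image_headBox hm ht0 ht (mem_sphere_zero_iff_norm.mp hθ) hhead)
  have hchart : ∀ j : Fin (n + 1), ∀ ε : ℝ, |ε| = 1 →
      μH[n] (sphereChart j ε '' headBox n m R t) ≤ K * volume (headBox n m R t) :=
    fun j ε hε => hausdorffMeasure_sphereChart_image_le j hε.ge _
  calc _ ≤ μH[n] (⋃ j, (sphereChart j 1 '' headBox n m R t ∪
          sphereChart j (-1) '' headBox n m R t)) := measure_mono hcover
    _ ≤ ∑ j, μH[n] (sphereChart j 1 '' headBox n m R t ∪
          sphereChart j (-1) '' headBox n m R t) := measure_iUnion_fintype_le _ _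
    _ ≤ ∑ _j : Fin (n + 1), 2 * (K * volume (headBox n m R t)) := by
        gcongr with j
        rw [two_mul]
        exact (measure_union_le _ _).trans (add_le_add (hchart j 1 (by norm_num))
          (hchart j (-1) (by norm_num)))
    _ = _ := by
        rw [volume_headBox hm (by positivity), Finset.sum_const, Finset.card_univ,
          Fintype.card_fin, nsmul_eq_mul]
        push_cast
        ring

theorem hausdorffMeasure_sphere_lt_top (n : ℕ) :
    μH[n] (Metric.sphere (0 : EuclideanSpace ℝ (Fin (n + 1))) 1) < ∞ := by
  obtain ⟨C, hC, hCle⟩ := exists_hausdorffMeasure_headSqNorm_le_of_le_half (Nat.zero_le n)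
  have hset : {θ | headSqNorm 0 θ ≤ (1 / 2 : ℝ) ^ 2} ∩
      Metric.sphere (0 : EuclideanSpace ℝ (Fin (n + 1))) 1 = Metric.sphere 0 1 := by
    refine Set.inter_eq_right.mpr fun θ _ => ?_
    simp [headSqNorm]
  have h := hCle (1 / 2) (by norm_num) le_rfl
  rw [hset, pow_zero, mul_one] at h
  exact h.trans_lt hC.lt_top

theorem exists_hausdorffMeasure_headSqNorm_le {n m : ℕ} (hm : m ≤ n) :
    ∃ C : ℝ≥0∞, C ≠ ∞ ∧ ∀ t : ℝ, 0 < t →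
      μH[n] ({θ | headSqNorm m θ ≤ t ^ 2} ∩ Metric.sphere (0 : EuclideanSpace ℝ (Fin (n + 1))) 1)
        ≤ C * ENNReal.ofReal t ^ m := by
  obtain ⟨C, hC, hCle⟩ := exists_hausdorffMeasure_headSqNorm_le_of_le_half hm
  set S := μH[n] (Metric.sphere (0 : EuclideanSpace ℝ (Fin (n + 1))) 1)
  refine ⟨C + 2 ^ m * S, by finiteness [(hausdorffMeasure_sphere_lt_top n).ne], fun t ht => ?_⟩
  rcases le_or_gt t (1 / 2) with hle | hgt
  · exact (hCle t ht.le hle).trans (by gcongr; exact le_self_add)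
  have h1 : 1 ≤ 2 ^ m * ENNReal.ofReal t ^ m := by
    rw [← mul_pow, ← ENNReal.ofReal_ofNat 2, ← ENNReal.ofReal_mul (by norm_num)]
    exact one_le_pow₀ (ENNReal.one_le_ofReal.mpr (by linarith))
  calc _ ≤ S := measure_mono Set.inter_subset_right
    _ ≤ 2 ^ m * S * ENNReal.ofReal t ^ m := by
        rw [mul_right_comm]; exact le_mul_of_one_le_left' h1
    _ ≤ _ := by gcongr; exact le_add_self

theorem stmt4_general (n k : ℕ) (hkn : k + 1 < n) (p : ℝ) (hp2 : p ≤ (n : ℝ) - k) :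
    MemLp (fun θ : EuclideanSpace ℝ (Fin (n + 1)) =>
        (Real.sqrt (∑ i : Fin (n + 1), if (i : ℕ) < n - k then (θ i) ^ 2 else 0))⁻¹ *
        (1 - Real.log
          (Real.sqrt (∑ i : Fin (n + 1), if (i : ℕ) < n - k then (θ i) ^ 2 else 0)))⁻¹)
      (ENNReal.ofReal p)
      ((μH[(n : ℝ)]).restrict (Metric.sphere (0 : EuclideanSpace ℝ (Fin (n + 1))) 1)) := by
  obtain ⟨C, hC, htube⟩ := exists_hausdorffMeasure_headSqNorm_le (Nat.sub_le n k)
  have hS : MeasurableSet (Metric.sphere (0 : EuclideanSpace ℝ (Fin (n + 1))) 1) :=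
    Metric.isClosed_sphere.measurableSet
  refine memLp_logWeight_comp (g := fun θ => √(headSqNorm (n - k) θ))
    (continuous_headSqNorm _).sqrt.measurable (fun θ => Real.sqrt_nonneg _) ?_
    (show 1 < n - k by omega) hC (fun t ht => ?_) (by rwa [Nat.cast_sub (by omega)])
  · refine (ae_restrict_iff' hS).mpr (Filter.Eventually.of_forall fun θ hθ => ?_)
    refine Real.sqrt_le_one.mpr ((headSqNorm_le_norm_sq _ θ).trans ?_)
    rw [mem_sphere_zero_iff_norm.mp hθ, one_pow]
  · rw [Measure.restrict_apply' hS]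
    simpa only [Real.sqrt_le_left ht.le] using htube t ht

/-- For `0 ≤ k < n-1` and `1 ≤ p ≤ n-k`, the function
`f̃(θ) = |θ'|⁻¹ (1 - log|θ'|)⁻¹` on `Sⁿ`, `θ' = (θ₁,…,θ_{n-k})`,
belongs to `L^p(Sⁿ)`. -/
theorem stmt4 (n k : ℕ) (hkn : k + 1 < n) (p : ℝ) (hp1 : 1 ≤ p) (hp2 : p ≤ (n : ℝ) - k) :
    MemLp (fun θ : EuclideanSpace ℝ (Fin (n + 1)) =>
        (Real.sqrt (∑ i : Fin (n + 1), if (i : ℕ) < n - k then (θ i) ^ 2 else 0))⁻¹ *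
        (1 - Real.log
          (Real.sqrt (∑ i : Fin (n + 1), if (i : ℕ) < n - k then (θ i) ^ 2 else 0)))⁻¹)
      (ENNReal.ofReal p)
      ((μH[(n : ℝ)]).restrict (Metric.sphere (0 : EuclideanSpace ℝ (Fin (n + 1))) 1)) :=
  stmt4_general n k hkn p hp2
end

section
/- Let f ∈ S(ℝⁿ) (Schwartz space) and define f̃(θ,t) = f(tθ) for θ ∈ S^{n−1}, t ∈ ℝ. Then for every m ∈ ℤ₊ there exist N ∈ ℤ₊ and a constant c independent of f such that sup_{|α|+j ≤ m} sup_{θ,t} (1+|t|)^m |(∂_θ^α ∂_t^j f̃)(θ,t)| ≤ c · sup_{|γ| ≤ N} sup_y (1+|y|)^N |(∂^γ f)(y)|. In particular f ↦ f̃ is a continuous map from S(ℝⁿ) to the space S_e(S^{n−1}×ℝ) of smooth rapidly decreasing even functions on S^{n−1}×ℝ. -/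
open MeasureTheory

noncomputable section

/-- Directional derivative operator along `v`. -/
def dirDeriv {E F : Type*} [NormedAddCommGroup E] [NormedSpace ℝ E]
    [NormedAddCommGroup F] [NormedSpace ℝ F] (v : E) (f : E → F) : E → F :=
  fun x => fderiv ℝ f x v

/-- Iterated mixed partial derivative `∂^α` along the directions `e i`,
`i`-th one taken `α i` times. -/
def multiDeriv {E F : Type*} [NormedAddCommGroup E] [NormedSpace ℝ E]
    [NormedAddCommGroup F] [NormedSpace ℝ F] {d : ℕ} (e : Fin d → E)
    (α : Fin d → ℕ) (f : E → F) : E → F :=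
  (List.finRange d).foldr (fun i g => (dirDeriv (e i))^[α i] g) f

/-- The partial derivative `∂^α` on `ℝ^d` for a multi-index `α`. -/
def multiPderiv {d : ℕ} {F : Type*} [NormedAddCommGroup F] [NormedSpace ℝ F]
    (α : Fin d → ℕ) (f : EuclideanSpace ℝ (Fin d) → F) :
    EuclideanSpace ℝ (Fin d) → F :=
  multiDeriv (fun i => EuclideanSpace.single i (1 : ℝ)) α f

/-- The order `|α| = α₁ + … + α_d` of a multi-index. -/
def mdeg {d : ℕ} (α : Fin d → ℕ) : ℕ := ∑ i, α i

/-- The finite set of multi-indices on `Fin d` with all entries `≤ N`. -/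
def mIdx (d N : ℕ) : Finset (Fin d → ℕ) := Fintype.piFinset fun _ => Finset.range (N + 1)

end

/-! Write `f̃ = f ∘ Φ` with `Φ(x, t) = t x / ‖x‖`, smooth on `{x ≠ 0} × ℝ`. Each
`∂_θ^α ∂_t^j f̃(θ, t)` is a value of `D^{|α|+j}(f ∘ Φ)(θ, t)` on vectors of norm `≤ 1`. By Faà di
Bruno, `‖D^k (f ∘ Φ)(θ, t)‖ ≤ k! · sup_{i ≤ k} ‖D^i f(tθ)‖ · (A (1 + |t|))^k` for a constant `A`,
because on the unit sphere the derivatives of `Φ` grow only linearly in `t`. Since `D^i f` is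
symmetric, its norm is at most `n^i` times the largest partial derivative `|∂^γ f(tθ)|`, `|γ| = i`,
and these are `≤ B (1 + |t|)^{-N}`; `N = 2m` absorbs the factor `(1 + |t|)^{m + k}`. -/

open Filter Set
open scoped ContDiff Nat Topology

section DirDerivs

variable {E F : Type*} [NormedAddCommGroup E] [NormedSpace ℝ E]
  [NormedAddCommGroup F] [NormedSpace ℝ F]

noncomputable def dirDerivs (l : List E) (g : E → F) : E → F := l.foldr dirDeriv g

@[simp] lemma dirDerivs_nil (g : E → F) : dirDerivs [] g = g := rfl

@[simp] lemma dirDerivs_cons (v : E) (l : List E) (g : E → F) :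
    dirDerivs (v :: l) g = dirDeriv v (dirDerivs l g) := rfl

lemma dirDerivs_append (l₁ l₂ : List E) (g : E → F) :
    dirDerivs (l₁ ++ l₂) g = dirDerivs l₁ (dirDerivs l₂ g) :=
  List.foldr_append ..

lemma iterate_dirDeriv (v : E) (k : ℕ) (g : E → F) :
    (dirDeriv v)^[k] g = dirDerivs (List.replicate k v) g := by
  induction k with
  | zero => rfl
  | succ k ih => rw [Function.iterate_succ_apply', ih, List.replicate_succ]; rfl

lemma ContDiffOn.dirDerivs {U : Set E} (hU : IsOpen U) {g : E → F}
    (hg : ContDiffOn ℝ ∞ g U) (l : List E) : ContDiffOn ℝ ∞ (dirDerivs l g) U := by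
  induction l with
  | nil => exact hg
  | cons v l ih => exact (ih.fderiv_of_isOpen hU (by simp)).clm_apply contDiffOn_const

lemma dirDerivs_ofFn_eq_iteratedFDeriv {U : Set E} (hU : IsOpen U) {g : E → F}
    (hg : ContDiffOn ℝ ∞ g U) {q : ℕ} (u : Fin q → E) {x : E} (hx : x ∈ U) :
    dirDerivs (List.ofFn u) g x = iteratedFDeriv ℝ q g x u := by
  induction q generalizing x with
  | zero => simp [List.ofFn_zero]
  | succ q ih =>
    have htail : dirDerivs (List.ofFn fun i => u i.succ) g =ᶠ[𝓝 x]
        fun y => iteratedFDeriv ℝ q g y fun i => u i.succ :=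
      eventuallyEq_of_mem (hU.mem_nhds hx) fun y hy => ih _ hy
    have hdiff : DifferentiableAt ℝ (iteratedFDeriv ℝ q g) x :=
      (hg.contDiffAt (hU.mem_nhds hx)).differentiableAt_iteratedFDeriv
        (by exact_mod_cast ENat.natCast_lt_top q)
    rw [List.ofFn_succ, dirDerivs_cons, dirDeriv, htail.fderiv_eq,
      fderiv_continuousMultilinear_apply_const_apply hdiff, iteratedFDeriv_succ_apply_left]
    rfl

lemma dirDeriv_comm {g : E → F} (hg : ContDiff ℝ ∞ g) (v w : E) :
    dirDeriv v (dirDeriv w g) = dirDeriv w (dirDeriv v g) := by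
  funext x
  have hofFn (u : Fin 2 → E) :=
    dirDerivs_ofFn_eq_iteratedFDeriv isOpen_univ hg.contDiffOn u (mem_univ x)
  have hsymm : IsSymmSndFDerivAt ℝ g x := hg.contDiffAt.isSymmSndFDerivAt
    (by rw [minSmoothness_of_isRCLikeNormedField]; exact ENat.LEInfty.out)
  calc dirDeriv v (dirDeriv w g) x = iteratedFDeriv ℝ 2 g x ![v, w] := hofFn ![v, w]
    _ = iteratedFDeriv ℝ 2 g x ![w, v] := hsymm.iteratedFDeriv_cons
    _ = dirDeriv w (dirDeriv v g) x := (hofFn ![w, v]).symm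

lemma dirDerivs_perm {g : E → F} (hg : ContDiff ℝ ∞ g) {l₁ l₂ : List E} (h : l₁.Perm l₂) :
    dirDerivs l₁ g = dirDerivs l₂ g := by
  induction h with
  | nil => rfl
  | cons v _ ih => rw [dirDerivs_cons, dirDerivs_cons, ih]
  | swap v w l =>
    have hl : ContDiff ℝ ∞ (dirDerivs l g) :=
      contDiffOn_univ.1 (contDiffOn_univ.2 hg |>.dirDerivs isOpen_univ l)
    exact dirDeriv_comm hl w v
  | trans _ _ ih₁ ih₂ => rw [ih₁, ih₂]

lemma norm_dirDerivs_le {U : Set E} (hU : IsOpen U) {g : E → F} (hg : ContDiffOn ℝ ∞ g U)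
    {l : List E} (hl : ∀ v ∈ l, ‖v‖ ≤ 1) {x : E} (hx : x ∈ U) :
    ‖dirDerivs l g x‖ ≤ ‖iteratedFDeriv ℝ l.length g x‖ := by
  rw [← List.ofFn_get l, dirDerivs_ofFn_eq_iteratedFDeriv hU hg _ hx, List.length_ofFn]
  calc ‖iteratedFDeriv ℝ l.length g x l.get‖
      ≤ ‖iteratedFDeriv ℝ l.length g x‖ * ∏ i, ‖l.get i‖ := ContinuousMultilinearMap.le_opNorm _ _
    _ ≤ ‖iteratedFDeriv ℝ l.length g x‖ :=
      mul_le_of_le_one_right (norm_nonneg _)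
        (Finset.prod_le_one (fun _ _ => norm_nonneg _) fun i _ => hl _ (List.get_mem l i))

end DirDerivs

section MultiIndex

variable {d : ℕ}

def idxList (γ : Fin d → ℕ) : List (Fin d) :=
  (List.finRange d).flatMap fun i => List.replicate (γ i) i

lemma length_idxList (γ : Fin d → ℕ) : (idxList γ).length = mdeg γ := by
  simp [idxList, mdeg, List.length_flatMap, Fin.sum_univ_def]

lemma count_idxList (γ : Fin d → ℕ) (i : Fin d) : (idxList γ).count i = γ i := by
  simp [idxList, List.count_flatMap, List.count_replicate, ← Fin.sum_univ_def]

lemma exists_perm_idxList {q : ℕ} (v : Fin q → Fin d) :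
    ∃ γ : Fin d → ℕ, mdeg γ = q ∧ (List.ofFn v).Perm (idxList γ) := by
  have hperm : (List.ofFn v).Perm (idxList fun i => (List.ofFn v).count i) :=
    List.perm_iff_count.2 fun i => by rw [count_idxList]
  exact ⟨_, by rw [← length_idxList, ← hperm.length_eq, List.length_ofFn], hperm⟩

lemma multiDeriv_eq_dirDerivs {E F : Type*} [NormedAddCommGroup E] [NormedSpace ℝ E]
    [NormedAddCommGroup F] [NormedSpace ℝ F] (e : Fin d → E) (α : Fin d → ℕ) (f : E → F) :
    multiDeriv e α f = dirDerivs ((idxList α).map e) f := by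
  unfold multiDeriv idxList
  induction List.finRange d with
  | nil => rfl
  | cons i L ih =>
    rw [List.foldr_cons, ih, iterate_dirDeriv, List.flatMap_cons, List.map_append,
      dirDerivs_append, List.map_replicate]

end MultiIndex

section Euclidean

variable {F : Type*} [NormedAddCommGroup F] [NormedSpace ℝ F]

lemma ContinuousMultilinearMap.norm_le_of_forall_single {ι : Type*} [Fintype ι]
    [DecidableEq ι] {q : ℕ} (T : ContinuousMultilinearMap ℝ (fun _ : Fin q => EuclideanSpace ℝ ι) F)
    {B : ℝ} (hB : 0 ≤ B) (h : ∀ v : Fin q → ι, ‖T fun i => EuclideanSpace.single (v i) 1‖ ≤ B) :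
    ‖T‖ ≤ Fintype.card ι ^ q * B := by
  refine T.opNorm_le_bound (by positivity) fun x => ?_
  have hx : x = fun i => ∑ k, x i k • EuclideanSpace.single k (1 : ℝ) := funext fun i => by
    simpa using ((EuclideanSpace.basisFun ι ℝ).sum_repr (x i)).symm
  have hexpand : T x = ∑ v : Fin q → ι,
      (∏ i, x i (v i)) • T fun i => EuclideanSpace.single (v i) 1 := by
    conv_lhs => rw [hx, T.map_sum]
    simp_rw [T.map_smul_univ]
  calc ‖T x‖ ≤ ∑ _v : Fin q → ι, (∏ i, ‖x i‖) * B := by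
        rw [hexpand]
        refine (norm_sum_le _ _).trans (Finset.sum_le_sum fun v _ => ?_)
        rw [norm_smul, norm_prod]
        gcongr with i
        · exact PiLp.norm_apply_le (x i) (v i)
        · exact h v
    _ = Fintype.card ι ^ q * B * ∏ i, ‖x i‖ := by
        rw [Finset.sum_const, Finset.card_univ, Fintype.card_fun, Fintype.card_fin, nsmul_eq_mul]
        push_cast
        ring

lemma norm_iteratedFDeriv_le_of_multiPderiv {d : ℕ} {f : EuclideanSpace ℝ (Fin d) → F}
    (hf : ContDiff ℝ ∞ f) (q : ℕ) (y : EuclideanSpace ℝ (Fin d)) {B : ℝ} (hB : 0 ≤ B)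
    (h : ∀ γ : Fin d → ℕ, mdeg γ = q → ‖multiPderiv γ f y‖ ≤ B) :
    ‖iteratedFDeriv ℝ q f y‖ ≤ d ^ q * B := by
  simpa using (iteratedFDeriv ℝ q f y).norm_le_of_forall_single hB fun v => by
    obtain ⟨γ, hγ, hperm⟩ := exists_perm_idxList v
    have hsorted : iteratedFDeriv ℝ q f y (fun i => EuclideanSpace.single (v i) 1) =
        multiPderiv γ f y := by
      rw [← dirDerivs_ofFn_eq_iteratedFDeriv isOpen_univ hf.contDiffOn _ (mem_univ y), multiPderiv,
        multiDeriv_eq_dirDerivs]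
      have hperm' := hperm.map fun k => EuclideanSpace.single k (1 : ℝ)
      rw [List.map_ofFn] at hperm'
      exact congrFun (dirDerivs_perm hf hperm') y
    exact hsorted ▸ h γ hγ

lemma norm_iteratedFDeriv_le_of_weighted_multiPderiv {d N : ℕ} (hd : 1 ≤ d)
    {f : EuclideanSpace ℝ (Fin d) → F} (hf : ContDiff ℝ ∞ f) {B : ℝ}
    (hB : ∀ γ : Fin d → ℕ, mdeg γ ≤ N → ∀ y, (1 + ‖y‖) ^ N * ‖multiPderiv γ f y‖ ≤ B)
    {i : ℕ} (hi : i ≤ N) (y : EuclideanSpace ℝ (Fin d)) :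
    ‖iteratedFDeriv ℝ i f y‖ ≤ d ^ N * (B / (1 + ‖y‖) ^ N) := by
  have hpos : 0 < (1 + ‖y‖) ^ N := by positivity
  have hB' : 0 ≤ B / (1 + ‖y‖) ^ N :=
    div_nonneg ((mul_nonneg hpos.le (norm_nonneg _)).trans (hB 0 (by simp [mdeg]) y)) hpos.le
  calc ‖iteratedFDeriv ℝ i f y‖ ≤ d ^ i * (B / (1 + ‖y‖) ^ N) :=
        norm_iteratedFDeriv_le_of_multiPderiv hf i y hB' fun γ hγ => by
          rw [le_div_iff₀ hpos, mul_comm]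
          exact hB γ (hγ ▸ hi) y
    _ ≤ d ^ N * (B / (1 + ‖y‖) ^ N) := by gcongr; exact_mod_cast hd

end Euclidean

section Slices

variable {E F : Type*} [NormedAddCommGroup E] [NormedSpace ℝ E]
  [NormedAddCommGroup F] [NormedSpace ℝ F] {W : Set (E × ℝ)} {H : E × ℝ → F}

lemma dirDerivs_eqOn_prodMk_left (hW : IsOpen W) (hH : ContDiffOn ℝ ∞ H W) {t : ℝ}
    {g : E → F} (hg : EqOn g (fun x => H (x, t)) {x | (x, t) ∈ W}) (l : List E) :
    EqOn (dirDerivs l g) (fun x => dirDerivs (l.map fun v => (v, 0)) H (x, t))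
      {x | (x, t) ∈ W} := by
  have hS : IsOpen {x | (x, t) ∈ W} := hW.preimage (continuous_id.prodMk continuous_const)
  induction l with
  | nil => exact hg
  | cons v l ih =>
    intro x hx
    have hdiff : DifferentiableAt ℝ (dirDerivs (l.map fun v => (v, (0 : ℝ))) H) (x, t) :=
      ((hH.dirDerivs hW _).contDiffAt (hW.mem_nhds hx)).differentiableAt (by simp)
    have hchain : HasFDerivAt (fun x' => dirDerivs (l.map fun v => (v, (0 : ℝ))) H (x', t))
        ((fderiv ℝ (dirDerivs (l.map fun v => (v, (0 : ℝ))) H) (x, t)).comp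
          (ContinuousLinearMap.inl ℝ E ℝ)) x :=
      hdiff.hasFDerivAt.comp x (hasFDerivAt_prodMk_left x t)
    simp only [dirDerivs_cons, List.map_cons, dirDeriv]
    rw [(eventuallyEq_of_mem (hS.mem_nhds hx) ih).fderiv_eq, hchain.fderiv]
    rfl

lemma iteratedDeriv_eqOn_prodMk_right (hW : IsOpen W) (hH : ContDiffOn ℝ ∞ H W) (x : E)
    (j : ℕ) :
    EqOn (iteratedDeriv j fun s => H (x, s))
      (fun s => dirDerivs (List.replicate j (0, 1)) H (x, s)) {s | (x, s) ∈ W} := by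
  have hS : IsOpen {s | (x, s) ∈ W} := hW.preimage (continuous_const.prodMk continuous_id)
  induction j with
  | zero => intro s _; simp
  | succ j ih =>
    intro s hs
    have hdiff : DifferentiableAt ℝ (dirDerivs (List.replicate j ((0 : E), (1 : ℝ))) H) (x, s) :=
      ((hH.dirDerivs hW _).contDiffAt (hW.mem_nhds hs)).differentiableAt (by simp)
    have hchain : HasDerivAt (fun s' => dirDerivs (List.replicate j ((0 : E), (1 : ℝ))) H (x, s'))
        (fderiv ℝ (dirDerivs (List.replicate j ((0 : E), (1 : ℝ))) H) (x, s) (0, 1)) s :=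
      hdiff.hasFDerivAt.comp_hasDerivAt s ((hasDerivAt_const s x).prodMk (hasDerivAt_id s))
    rw [iteratedDeriv_succ, (eventuallyEq_of_mem (hS.mem_nhds hs) ih).deriv_eq, hchain.deriv,
      List.replicate_succ]
    rfl

lemma norm_multiDeriv_iteratedDeriv_le (hW : IsOpen W) (hH : ContDiffOn ℝ ∞ H W) {d : ℕ}
    {e : Fin d → E} (he : ∀ i, ‖e i‖ ≤ 1) (α : Fin d → ℕ) (j : ℕ) {x : E} {t : ℝ}
    (hx : (x, t) ∈ W) :
    ‖multiDeriv e α (fun y => iteratedDeriv j (fun s => H (y, s)) t) x‖ ≤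
      ‖iteratedFDeriv ℝ (mdeg α + j) H (x, t)‖ := by
  set l := ((idxList α).map e).map (fun v => (v, (0 : ℝ))) ++ List.replicate j ((0 : E), (1 : ℝ))
  have hl : ∀ p ∈ l, ‖p‖ ≤ 1 := by
    intro p hp
    rcases List.mem_append.1 hp with hp | hp
    · obtain ⟨_, hv, rfl⟩ := List.mem_map.1 hp
      obtain ⟨i, _, rfl⟩ := List.mem_map.1 hv
      simpa [Prod.norm_def] using he i
    · simp [List.eq_of_mem_replicate hp, Prod.norm_def]
  have hlen : l.length = mdeg α + j := by simp [l, length_idxList]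
  rw [multiDeriv_eq_dirDerivs, dirDerivs_eqOn_prodMk_left hW (hH.dirDerivs hW _)
    (fun y hy => iteratedDeriv_eqOn_prodMk_right hW hH y j hy) _ hx, ← dirDerivs_append, ← hlen]
  exact norm_dirDerivs_le hW hH hl hx

end Slices

lemma ContinuousLinearMap.norm_iteratedFDeriv_le_max {E F : Type*} [NormedAddCommGroup E]
    [NormedSpace ℝ E] [NormedAddCommGroup F] [NormedSpace ℝ F] (L : E →L[ℝ] F) (x : E) (i : ℕ) :
    ‖iteratedFDeriv ℝ i L x‖ ≤ max ‖L x‖ ‖L‖ := by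
  match i with
  | 0 => simp
  | 1 => simp [L.fderiv]
  | k + 2 =>
    have hconst : fderiv ℝ L = fun _ => L := funext fun _ => L.fderiv
    rw [← norm_iteratedFDeriv_fderiv, hconst, iteratedFDeriv_const_of_ne k.succ_ne_zero]
    simp

lemma norm_iteratedFDerivWithin_comp_fst_le {E F G : Type*} [NormedAddCommGroup E]
    [NormedSpace ℝ E] [NormedAddCommGroup F] [NormedSpace ℝ F] [NormedAddCommGroup G]
    [NormedSpace ℝ G] {V : Set E} {u : E → F} (hu : ContDiffOn ℝ ∞ u V) (hV : IsOpen V)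
    {p : E × G} (hp : p.1 ∈ V) (b : ℕ) :
    ‖iteratedFDerivWithin ℝ b (fun q : E × G => u q.1) (Prod.fst ⁻¹' V) p‖ ≤
      ‖iteratedFDerivWithin ℝ b u V p.1‖ := by
  have hcomp := (ContinuousLinearMap.fst ℝ E G).iteratedFDerivWithin_comp_right hu
    hV.uniqueDiffOn (hV.preimage continuous_fst).uniqueDiffOn hp (i := b) ENat.LEInfty.out
  calc ‖iteratedFDerivWithin ℝ b (fun q : E × G => u q.1) (Prod.fst ⁻¹' V) p‖
      = ‖(iteratedFDerivWithin ℝ b u V p.1).compContinuousLinearMap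
          fun _ => ContinuousLinearMap.fst ℝ E G‖ := congrArg norm hcomp
    _ ≤ ‖iteratedFDerivWithin ℝ b u V p.1‖ * ∏ _i : Fin b, ‖ContinuousLinearMap.fst ℝ E G‖ :=
        ContinuousMultilinearMap.norm_compContinuousLinearMap_le _ _
    _ ≤ ‖iteratedFDerivWithin ℝ b u V p.1‖ :=
        mul_le_of_le_one_right (norm_nonneg _) (Finset.prod_le_one (fun _ _ => norm_nonneg _)
          fun _ _ => ContinuousLinearMap.norm_fst_le ℝ E G)

section Polar

variable {E : Type*} [NormedAddCommGroup E]

lemma isOpen_fst_ne_zero : IsOpen {p : E × ℝ | p.1 ≠ 0} :=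
  isOpen_ne_fun continuous_fst continuous_const

variable [InnerProductSpace ℝ E]

/-- `polarMap (θ, t) = tθ` on the unit sphere, extended to `x ≠ 0` homogeneously of degree `0`
in `x`, which is how `∂_θ` acts. -/
noncomputable def polarMap (p : E × ℝ) : E := (p.2 / ‖p.1‖) • p.1

lemma contDiffOn_polarMap : ContDiffOn ℝ ∞ polarMap {p : E × ℝ | p.1 ≠ 0} := fun _ hp =>
  ((contDiffAt_snd.div (contDiffAt_fst.norm ℝ hp) (norm_ne_zero_iff.2 hp)).smul
    contDiffAt_fst).contDiffWithinAt

lemma contDiffOn_inv_norm_smul : ContDiffOn ℝ ∞ (fun x : E => ‖x‖⁻¹ • x) {x | x ≠ 0} :=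
  fun _ hx => (((contDiffAt_id.norm ℝ hx).inv (norm_ne_zero_iff.2 hx)).smul
    contDiffAt_id).contDiffWithinAt

variable [FiniteDimensional ℝ E]

lemma exists_norm_iteratedFDerivWithin_inv_norm_smul_le (m : ℕ) :
    ∃ C, ∀ θ : E, ‖θ‖ = 1 → ∀ i ≤ m,
      ‖iteratedFDerivWithin ℝ i (fun x : E => ‖x‖⁻¹ • x) {x | x ≠ 0} θ‖ ≤ C := by
  have hsphere : Metric.sphere (0 : E) 1 ⊆ {x | x ≠ 0} := fun x hx =>
    ne_zero_of_norm_ne_zero (by simp [mem_sphere_zero_iff_norm.1 hx])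
  obtain ⟨C, hC⟩ := (isCompact_sphere (0 : E) 1).exists_bound_of_continuousOn
    (f := fun x => ∑ i ∈ Finset.range (m + 1),
      ‖iteratedFDerivWithin ℝ i (fun x : E => ‖x‖⁻¹ • x) {x | x ≠ 0} x‖)
    (continuousOn_finsetSum _ fun i _ =>
      ((contDiffOn_inv_norm_smul.continuousOn_iteratedFDerivWithin
        ENat.LEInfty.out isOpen_ne.uniqueDiffOn).mono hsphere).norm)
  refine ⟨C, fun θ hθ i hi => ?_⟩
  calc ‖iteratedFDerivWithin ℝ i (fun x : E => ‖x‖⁻¹ • x) {x | x ≠ 0} θ‖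
      ≤ ∑ i ∈ Finset.range (m + 1),
          ‖iteratedFDerivWithin ℝ i (fun x : E => ‖x‖⁻¹ • x) {x | x ≠ 0} θ‖ :=
        Finset.single_le_sum (f := fun j =>
          ‖iteratedFDerivWithin ℝ j (fun x : E => ‖x‖⁻¹ • x) {x | x ≠ 0} θ‖)
          (fun _ _ => norm_nonneg _) (Finset.mem_range.2 (Nat.lt_succ_of_le hi))
    _ ≤ C := (Real.le_norm_self _).trans (hC θ (mem_sphere_zero_iff_norm.2 hθ))

lemma exists_norm_iteratedFDerivWithin_polarMap_le (m : ℕ) :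
    ∃ A, 1 ≤ A ∧ ∀ θ : E, ‖θ‖ = 1 → ∀ (t : ℝ) (i : ℕ), 1 ≤ i → i ≤ m →
      ‖iteratedFDerivWithin ℝ i polarMap {p : E × ℝ | p.1 ≠ 0} (θ, t)‖ ≤ (A * (1 + |t|)) ^ i := by
  obtain ⟨C, hC⟩ := exists_norm_iteratedFDerivWithin_inv_norm_smul_le (E := E) m
  set K := max C 1
  have hK : 1 ≤ K := le_max_right _ _
  refine ⟨2 * K, by linarith, fun θ hθ t i hi1 him => ?_⟩
  set W := {p : E × ℝ | p.1 ≠ 0}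
  have hθW : (θ, t) ∈ W := ne_zero_of_norm_ne_zero (by simp [hθ])
  have hsnd : ∀ a, ‖iteratedFDerivWithin ℝ a (fun p : E × ℝ => p.2) W (θ, t)‖ ≤ 1 + |t| := by
    intro a
    rw [iteratedFDerivWithin_of_isOpen a isOpen_fst_ne_zero hθW]
    refine ((ContinuousLinearMap.snd ℝ E ℝ).norm_iteratedFDeriv_le_max _ a).trans (max_le ?_ ?_)
    · simp
    · linarith [ContinuousLinearMap.norm_snd_le ℝ E ℝ, abs_nonneg t]
  have hdir : ∀ b ≤ m,
      ‖iteratedFDerivWithin ℝ b (fun p : E × ℝ => ‖p.1‖⁻¹ • p.1) W (θ, t)‖ ≤ K := fun b hb =>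
    (norm_iteratedFDerivWithin_comp_fst_le contDiffOn_inv_norm_smul isOpen_ne hθW b).trans
      ((hC θ hθ b hb).trans (le_max_left _ _))
  have hsplit : polarMap = fun p : E × ℝ => p.2 • (‖p.1‖⁻¹ • p.1) :=
    funext fun p => by simp [polarMap, smul_smul, div_eq_mul_inv]
  have hleibniz := norm_iteratedFDerivWithin_smul_le contDiff_snd.contDiffOn
    (contDiffOn_inv_norm_smul.comp contDiff_fst.contDiffOn fun _ hp => hp)
    isOpen_fst_ne_zero.uniqueDiffOn hθW (n := i) ENat.LEInfty.out
  rw [hsplit]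
  calc _ ≤ _ := hleibniz
    _ ≤ ∑ a ∈ Finset.range (i + 1), (i.choose a : ℝ) * ((1 + |t|) * K) := by
        refine Finset.sum_le_sum fun a _ => ?_
        rw [mul_assoc]
        gcongr
        exacts [hsnd a, hdir (i - a) (by omega)]
    _ = 2 ^ i * ((1 + |t|) * K) := by
        rw [← Finset.sum_mul, ← Nat.cast_sum, Nat.sum_range_choose, Nat.cast_pow, Nat.cast_ofNat]
    _ ≤ 2 ^ i * ((1 + |t|) ^ i * K ^ i) := by
        have ht : 1 ≤ 1 + |t| := by linarith [abs_nonneg t]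
        gcongr
        exacts [le_self_pow₀ ht (by omega), le_self_pow₀ hK (by omega)]
    _ = (2 * K * (1 + |t|)) ^ i := by rw [mul_pow, mul_pow]; ring

end Polar

lemma exists_norm_iteratedFDeriv_comp_polarMap_le {E G : Type*} [NormedAddCommGroup E]
    [InnerProductSpace ℝ E] [FiniteDimensional ℝ E] [NormedAddCommGroup G] [NormedSpace ℝ G]
    (m : ℕ) :
    ∃ A, 1 ≤ A ∧ ∀ g : E → G, ContDiff ℝ ∞ g → ∀ θ : E, ‖θ‖ = 1 → ∀ t C : ℝ,
      (∀ i ≤ m, ‖iteratedFDeriv ℝ i g (t • θ)‖ ≤ C) → ∀ k ≤ m,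
        ‖iteratedFDeriv ℝ k (g ∘ polarMap) (θ, t)‖ ≤ k ! * C * (A * (1 + |t|)) ^ k := by
  obtain ⟨A, hA, hpolar⟩ := exists_norm_iteratedFDerivWithin_polarMap_le (E := E) m
  refine ⟨A, hA, fun g hg θ hθ t C hC k hk => ?_⟩
  have hθW : (θ, t) ∈ {p : E × ℝ | p.1 ≠ 0} := ne_zero_of_norm_ne_zero (by simp [hθ])
  have hpolarθ : polarMap (θ, t) = t • θ := by simp [polarMap, hθ]
  rw [← iteratedFDerivWithin_of_isOpen k isOpen_fst_ne_zero hθW]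
  exact norm_iteratedFDerivWithin_comp_le hg.contDiffOn contDiffOn_polarMap
    ENat.LEInfty.out uniqueDiffOn_univ isOpen_fst_ne_zero.uniqueDiffOn
    (mapsTo_univ _ _) hθW
    (fun i hi => by rw [iteratedFDerivWithin_univ, hpolarθ]; exact hC i (hi.trans hk))
    (fun i hi₁ hi₂ => hpolar θ hθ t i hi₁ (hi₂.trans hk))

lemma pow_mul_factorial_mul_div_pow_le {r A K : ℝ} {k m : ℕ} (hr : 1 ≤ r) (hA : 1 ≤ A)
    (hK : 0 ≤ K) (hk : k ≤ m) :
    r ^ m * (k ! * (K / r ^ (2 * m)) * (A * r) ^ k) ≤ m ! * A ^ m * K := by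
  have hr0 : 0 < r ^ (2 * m) := by positivity
  have hpow : r ^ m * r ^ k ≤ r ^ (2 * m) := by
    rw [← pow_add]; exact pow_le_pow_right₀ hr (by omega)
  calc r ^ m * (k ! * (K / r ^ (2 * m)) * (A * r) ^ k)
      = k ! * A ^ k * K * (r ^ m * r ^ k / r ^ (2 * m)) := by rw [mul_pow]; ring
    _ ≤ m ! * A ^ m * K * 1 := by
        gcongr
        exact (div_le_one hr0).2 hpow
    _ = m ! * A ^ m * K := mul_one _

/-- Continuity of `f ↦ f̃`, `f̃(θ,t) = f(tθ)`, from `S(ℝⁿ)` to `S_e(S^{n-1}×ℝ)`: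
for every `m` there are `N` and `c > 0`, independent of `f`, with
`sup_{|α|+j≤m} sup_{θ∈S^{n-1},t} (1+|t|)^m |∂_θ^α ∂_t^j f̃(θ,t)|
  ≤ c sup_{|γ|≤N} sup_y (1+|y|)^N |∂^γ f(y)|`,
where `∂_θ^α` acts through the homogeneous extension `x ↦ f(t x/|x|)`. -/
theorem stmt12 (n : ℕ) (hn : 1 ≤ n) (m : ℕ) :
    ∃ (N : ℕ) (c : ℝ), 0 < c ∧
      ∀ f : SchwartzMap (EuclideanSpace ℝ (Fin n)) ℝ, ∀ B : ℝ,
        (∀ γ : Fin n → ℕ, mdeg γ ≤ N → ∀ y : EuclideanSpace ℝ (Fin n),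
          (1 + ‖y‖) ^ N * |multiPderiv γ (⇑f) y| ≤ B) →
        ∀ (α : Fin n → ℕ) (j : ℕ), mdeg α + j ≤ m →
          ∀ θ : EuclideanSpace ℝ (Fin n), ‖θ‖ = 1 → ∀ t : ℝ,
            (1 + |t|) ^ m *
              |multiPderiv α
                (fun x => iteratedDeriv j (fun s => f ((s / ‖x‖) • x)) t) θ| ≤
              c * B := by
  obtain ⟨A, hA, hcomp⟩ :=
    exists_norm_iteratedFDeriv_comp_polarMap_le (E := EuclideanSpace ℝ (Fin n)) (G := ℝ) m
  refine ⟨2 * m, m ! * A ^ m * n ^ (2 * m), by positivity, fun f B hB α j hαj θ hθ t => ?_⟩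
  have hf := f.smooth ⊤
  have hB' : ∀ γ : Fin n → ℕ, mdeg γ ≤ 2 * m → ∀ y,
      (1 + ‖y‖) ^ (2 * m) * ‖multiPderiv γ f y‖ ≤ B := hB
  have hB0 : 0 ≤ B := (by positivity : (0 : ℝ) ≤ _).trans (hB' 0 (by simp [mdeg]) 0)
  have hfθ : ∀ i ≤ m, ‖iteratedFDeriv ℝ i f (t • θ)‖ ≤ n ^ (2 * m) * (B / (1 + |t|) ^ (2 * m)) :=
    fun i hi => by
      simpa [norm_smul, hθ] using
        norm_iteratedFDeriv_le_of_weighted_multiPderiv hn hf hB' (by omega : i ≤ 2 * m) (t • θ)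
  have hθW : (θ, t) ∈ {p : EuclideanSpace ℝ (Fin n) × ℝ | p.1 ≠ 0} :=
    ne_zero_of_norm_ne_zero (by simp [hθ])
  calc (1 + |t|) ^ m * |multiPderiv α (fun x => iteratedDeriv j (fun s => f ((s / ‖x‖) • x)) t) θ|
      ≤ (1 + |t|) ^ m * ‖iteratedFDeriv ℝ (mdeg α + j) (f ∘ polarMap) (θ, t)‖ := by
        gcongr
        exact norm_multiDeriv_iteratedDeriv_le isOpen_fst_ne_zero
          (hf.comp_contDiffOn contDiffOn_polarMap) (fun i => by simp) α j hθW
    _ ≤ (1 + |t|) ^ m * ((mdeg α + j) ! * (n ^ (2 * m) * (B / (1 + |t|) ^ (2 * m))) *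
          (A * (1 + |t|)) ^ (mdeg α + j)) := by
        gcongr
        exact hcomp f hf θ hθ t _ hfθ _ hαj
    _ ≤ m ! * A ^ m * (n ^ (2 * m) * B) := by
        rw [← mul_div_assoc]
        exact pow_mul_factorial_mul_div_pow_le (by simp) hA (by positivity) hαj
    _ = m ! * A ^ m * n ^ (2 * m) * B := by ring
end
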